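/- (Coulson integral formula for a vertex) Let G be a finite simple graph with adjacency matrix A and v_i a vertex. Then E_G(v_i) = (1/π) ∫_{-∞}^{∞} [1 - ix·φ(G - v_i; ix)/φ(G; ix)] dx, where the integral is understood as an improper Riemann integral (principal value) and E_G(v_i) = |A|_{ii}. -/

import Mathlib

/-!
Diagonalise the symmetric matrix `A = U diag(μ) Uᵀ` and put `wₖ = Uᵢₖ²`, so that `∑ₖ wₖ = 1`.
By Cramer's rule `φ(G - vᵢ; z) / φ(G; z) = ((z - A)⁻¹)ᵢᵢ = ∑ₖ wₖ / (z - μₖ)`, hence for `x ≠ 0`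
the integrand equals `∑ₖ wₖ μₖ / (μₖ - i x)`. Each summand has the elementary primitive
`|μ| arctan (x / |μ|) + i (μ / 2) log (μ² + x²)`, whose increment over `[-R, R]` tends to `π |μ|`.
On the other side `|A| = √(A²)` is the functional calculus of `|·|` at `A`, so `|A|ᵢᵢ = ∑ₖ wₖ |μₖ|`.
-/

open Matrix BigOperators Finset Polynomial

noncomputable def adjMat {V : Type*} [Fintype V] (G : SimpleGraph V) : Matrix V V ℝ :=
  letI := Classical.decRel G.Adj; G.adjMatrix ℝ

noncomputable def absMat {V : Type*} [Fintype V] [DecidableEq V] (A : Matrix V V ℝ) :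
    Matrix V V ℝ :=
  ((Matrix.posSemidef_self_mul_conjTranspose A).1.eigenvectorUnitary : Matrix V V ℝ) *
    diagonal ((↑) ∘ Real.sqrt ∘ (Matrix.posSemidef_self_mul_conjTranspose A).1.eigenvalues) *
    (star (Matrix.posSemidef_self_mul_conjTranspose A).1.eigenvectorUnitary : Matrix V V ℝ)

/-- The energy of a vertex: the (i,i) entry of |A| = (A Aᴴ)^{1/2}. -/
noncomputable def vertexEnergy {V : Type*} [Fintype V] [DecidableEq V]
    (G : SimpleGraph V) (i : V) : ℝ :=
  absMat (adjMat G) i i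

open MeasureTheory Filter Topology

theorem ofReal_sub_I_mul_ne_zero {μ : ℝ} (hμ : μ ≠ 0) (x : ℝ) : (μ : ℂ) - Complex.I * x ≠ 0 := by
  intro h
  exact hμ (by simpa using congrArg Complex.re h)

theorem intervalIntegrable_div_sub_I_mul (μ a b : ℝ) :
    IntervalIntegrable (fun x : ℝ => (μ : ℂ) / (μ - Complex.I * x)) volume a b := by
  rcases eq_or_ne μ 0 with rfl | hμ
  · simp
  · exact (continuous_const.div (by fun_prop) (ofReal_sub_I_mul_ne_zero hμ)).intervalIntegrable _ _

/-- Real part `|μ| arctan (x / |μ|)` and imaginary part `(μ / 2) log (μ² + x²)`, as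
`μ / (μ - i x) = (μ² + i μ x) / (μ² + x²)`. -/
theorem hasDerivAt_div_sub_I_mul_primitive {μ : ℝ} (hμ : μ ≠ 0) (x : ℝ) :
    HasDerivAt (fun y : ℝ => ((|μ| * Real.arctan (y / |μ|) : ℝ) : ℂ)
        + Complex.I * ((μ / 2) * Real.log (μ ^ 2 + y ^ 2) : ℝ))
      ((μ : ℂ) / (μ - Complex.I * x)) x := by
  have hsq : μ ^ 2 + x ^ 2 ≠ 0 := by positivity
  have hre : HasDerivAt (fun y : ℝ => |μ| * Real.arctan (y / |μ|)) (μ ^ 2 / (μ ^ 2 + x ^ 2)) x := by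
    refine (((Real.hasDerivAt_arctan _).comp x ((hasDerivAt_id' x).div_const |μ|)).const_mul
      |μ|).congr_deriv ?_
    have : |μ| ≠ 0 := abs_ne_zero.2 hμ
    field_simp
    rw [← sq_abs μ]
    ring
  have him : HasDerivAt (fun y : ℝ => (μ / 2) * Real.log (μ ^ 2 + y ^ 2))
      (μ * x / (μ ^ 2 + x ^ 2)) x := by
    refine (((Real.hasDerivAt_log hsq).comp x
      ((hasDerivAt_pow 2 x).const_add (μ ^ 2))).const_mul (μ / 2)).congr_deriv ?_
    field_simp
    ring
  refine (hre.ofReal_comp.add (him.ofReal_comp.const_mul Complex.I)).congr_deriv ?_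
  rw [eq_div_iff (ofReal_sub_I_mul_ne_zero hμ x)]
  have : ((μ : ℂ) ^ 2 + x ^ 2) ≠ 0 := by exact_mod_cast hsq
  push_cast
  field_simp
  ring_nf
  rw [Complex.I_sq]
  ring

theorem intervalIntegral_div_sub_I_mul {μ : ℝ} (hμ : μ ≠ 0) (R : ℝ) :
    ∫ x in -R..R, (μ : ℂ) / (μ - Complex.I * x) = ((2 * |μ| * Real.arctan (R / |μ|) : ℝ) : ℂ) := by
  rw [intervalIntegral.integral_eq_sub_of_hasDerivAt
    (fun x _ => hasDerivAt_div_sub_I_mul_primitive hμ x) (intervalIntegrable_div_sub_I_mul μ _ _)]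
  simp only [neg_div, Real.arctan_neg, neg_sq]
  push_cast
  ring

theorem tendsto_intervalIntegral_div_sub_I_mul (μ : ℝ) :
    Tendsto (fun R : ℝ => ∫ x in -R..R, (μ : ℂ) / (μ - Complex.I * x)) atTop
      (𝓝 ((Real.pi * |μ| : ℝ) : ℂ)) := by
  rcases eq_or_ne μ 0 with rfl | hμ
  · simp
  simp only [intervalIntegral_div_sub_I_mul hμ]
  have harctan : Tendsto (fun R : ℝ => Real.arctan (R / |μ|)) atTop (𝓝 (Real.pi / 2)) :=
    (tendsto_nhds_of_tendsto_nhdsWithin Real.tendsto_arctan_atTop).comp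
      (tendsto_id.atTop_div_const (abs_pos.2 hμ))
  convert (Complex.continuous_ofReal.tendsto _).comp (harctan.const_mul (2 * |μ|)) using 2
  · rfl
  · push_cast
    ring

section Matrix

variable {m : Type*} [Fintype m]

theorem Matrix.map_ofReal_mul (P Q : Matrix m m ℝ) :
    (P * Q).map Complex.ofReal = P.map Complex.ofReal * Q.map Complex.ofReal :=
  Matrix.map_mul (f := Complex.ofRealHom)

variable [DecidableEq m]

theorem Matrix.mul_diagonal_mul_apply {R : Type*} [NonUnitalNonAssocSemiring R]
    (W V : Matrix m m R) (d : m → R) (i j : m) :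
    (W * diagonal d * V) i j = ∑ k, W i k * d k * V k j := by
  simp only [mul_apply (M := W * diagonal d), mul_diagonal]

theorem Matrix.inv_smul_one_sub_mul_diagonal_mul {K : Type*} [Field K] {W V : Matrix m m K}
    (hVW : V * W = 1) (d : m → K) {z : K} (hz : ∀ k, z ≠ d k) :
    (z • 1 - W * diagonal d * V)⁻¹ = W * diagonal (fun k => (z - d k)⁻¹) * V := by
  have hWV : W * V = 1 := mul_eq_one_comm.1 hVW
  have hshift : z • 1 - W * diagonal d * V = W * diagonal (fun k => z - d k) * V := by
    rw [← diagonal_sub, Matrix.mul_sub, Matrix.sub_mul, ← smul_one_eq_diagonal, Matrix.mul_smul,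
      Matrix.smul_mul, Matrix.mul_one, hWV]
  refine inv_eq_right_inv ?_
  calc (z • 1 - W * diagonal d * V) * (W * diagonal (fun k => (z - d k)⁻¹) * V)
      = W * (diagonal (fun k => z - d k) * (V * W) * diagonal (fun k => (z - d k)⁻¹)) * V := by
        rw [hshift]
        simp only [Matrix.mul_assoc]
    _ = 1 := by
      rw [hVW, Matrix.mul_one, diagonal_mul_diagonal]
      simp [sub_ne_zero.2 (hz _), hWV]

theorem Matrix.det_submatrix_succAbove_div_det {K : Type*} [Field K] {n : ℕ}
    (M : Matrix (Fin (n + 1)) (Fin (n + 1)) K) (i : Fin (n + 1)) :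
    (M.submatrix i.succAbove i.succAbove).det / M.det = M⁻¹ i i := by
  rw [inv_def, Ring.inverse_eq_inv', smul_apply, adjugate_fin_succ_eq_det_submatrix,
    Even.neg_one_pow ⟨i, rfl⟩, one_mul, smul_eq_mul, div_eq_inv_mul]

end Matrix

section Hermitian

variable {m : Type*} [Fintype m] [DecidableEq m] {A : Matrix m m ℝ} (hA : A.IsHermitian)

local notation "U" => (hA.eigenvectorUnitary : Matrix m m ℝ)

theorem Matrix.IsHermitian.cfc_apply_self (f : ℝ → ℝ) (i : m) :
    hA.cfc f i i = ∑ k, f (hA.eigenvalues k) * U i k ^ 2 := by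
  rw [IsHermitian.cfc, Unitary.conjStarAlgAut_apply, mul_diagonal_mul_apply]
  refine Finset.sum_congr rfl fun k _ => ?_
  simp only [RCLike.ofReal_real_eq_id, Function.comp_apply, id_eq, star_apply, star_trivial, sq]
  ring

theorem Matrix.IsHermitian.sum_sq_eigenvectorUnitary (i : m) : ∑ k, U i k ^ 2 = 1 := by
  simpa [← hA.cfc_eq, cfc_one ℝ A] using (hA.cfc_apply_self 1 i).symm

theorem absMat_eq_cfc_abs : absMat A = hA.cfc (|·|) := by
  have hAA := (posSemidef_self_mul_conjTranspose A).1
  have hsa : IsSelfAdjoint A := hA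
  calc absMat A = hAA.cfc Real.sqrt := rfl
    _ = cfc Real.sqrt (A ^ 2) := by rw [← hAA.cfc_eq, hA.eq, sq]
    _ = cfc (Real.sqrt ∘ (· ^ 2)) A := by rw [cfc_comp _ _ A, cfc_pow_id A 2]
    _ = hA.cfc (|·|) := by
      rw [← hA.cfc_eq]
      congr 1
      ext x
      exact Real.sqrt_sq_eq_abs x

theorem absMat_apply_self (i : m) :
    absMat A i i = ∑ k, |hA.eigenvalues k| * U i k ^ 2 := by
  rw [absMat_eq_cfc_abs hA, hA.cfc_apply_self]

theorem Matrix.IsHermitian.inv_smul_one_sub_map_ofReal_apply_self {z : ℂ}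
    (hz : ∀ k, z ≠ hA.eigenvalues k) (i : m) :
    (z • 1 - A.map Complex.ofReal)⁻¹ i i = ∑ k, ((U i k ^ 2 : ℝ) : ℂ) / (z - hA.eigenvalues k) := by
  have hspec : A.map Complex.ofReal = (U).map Complex.ofReal *
      diagonal (fun k => (hA.eigenvalues k : ℂ)) * (star U).map Complex.ofReal := by
    conv_lhs => rw [hA.spectral_theorem, Unitary.conjStarAlgAut_apply]
    simp [map_ofReal_mul]
  have hunit : (star U).map Complex.ofReal * (U).map Complex.ofReal = 1 := by
    simp [← map_ofReal_mul]
  rw [hspec, inv_smul_one_sub_mul_diagonal_mul hunit _ hz, mul_diagonal_mul_apply]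
  refine Finset.sum_congr rfl fun k _ => ?_
  simp only [map_apply, star_apply, star_trivial, sq, Complex.ofReal_mul, div_eq_mul_inv]
  ring

end Hermitian

theorem Finset.one_sub_mul_sum_div_sub {ι K : Type*} [Field K] (s : Finset ι) {w μ : ι → K}
    (hw : ∑ k ∈ s, w k = 1) {z : K} (hz : ∀ k ∈ s, z ≠ μ k) :
    1 - z * ∑ k ∈ s, w k / (z - μ k) = ∑ k ∈ s, w k * (μ k / (μ k - z)) := by
  rw [← hw, Finset.mul_sum, ← Finset.sum_sub_distrib]
  refine Finset.sum_congr rfl fun k hk => ?_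
  have h₁ : z - μ k ≠ 0 := sub_ne_zero.2 (hz k hk)
  have h₂ : μ k - z ≠ 0 := sub_ne_zero.2 (hz k hk).symm
  field_simp
  ring

section Coulson

variable {n : ℕ}

/-- `1 - z φ(G - vᵢ; z) / φ(G; z)`, with `φ` the characteristic polynomial of `A` and `G - vᵢ`
encoded by the principal submatrix obtained by deleting row and column `i`. -/
noncomputable def coulsonIntegrand (A : Matrix (Fin (n + 1)) (Fin (n + 1)) ℝ) (i : Fin (n + 1))
    (z : ℂ) : ℂ :=
  1 - z * (z • (1 : Matrix (Fin n) (Fin n) ℂ)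
      - (A.map Complex.ofReal).submatrix i.succAbove i.succAbove).det /
    (z • (1 : Matrix (Fin (n + 1)) (Fin (n + 1)) ℂ) - A.map Complex.ofReal).det

variable {A : Matrix (Fin (n + 1)) (Fin (n + 1)) ℝ} (hA : A.IsHermitian)

local notation "U" => (hA.eigenvectorUnitary : Matrix (Fin (n + 1)) (Fin (n + 1)) ℝ)

theorem Matrix.IsHermitian.coulsonIntegrand_eq_sum {z : ℂ} (hz : ∀ k, z ≠ hA.eigenvalues k)
    (i : Fin (n + 1)) :
    coulsonIntegrand A i z
      = ∑ k, ((U i k ^ 2 : ℝ) : ℂ) * (hA.eigenvalues k / (hA.eigenvalues k - z)) := by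
  have hminor : z • (1 : Matrix (Fin n) (Fin n) ℂ)
        - (A.map Complex.ofReal).submatrix i.succAbove i.succAbove
      = (z • 1 - A.map Complex.ofReal).submatrix i.succAbove i.succAbove := by
    ext a b
    simp [one_apply, Fin.succAbove_right_injective.eq_iff]
  have hw : ∑ k, ((U i k ^ 2 : ℝ) : ℂ) = 1 := by
    exact_mod_cast hA.sum_sq_eigenvectorUnitary i
  rw [coulsonIntegrand, hminor, mul_div_assoc, det_submatrix_succAbove_div_det,
    hA.inv_smul_one_sub_map_ofReal_apply_self hz,
    Finset.one_sub_mul_sum_div_sub _ hw fun k _ => hz k]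

theorem Matrix.IsHermitian.intervalIntegral_coulsonIntegrand (i : Fin (n + 1)) (R : ℝ) :
    ∫ x in -R..R, coulsonIntegrand A i (Complex.I * x)
      = ∑ k, ((U i k ^ 2 : ℝ) : ℂ) *
          ∫ x in -R..R, (hA.eigenvalues k : ℂ) / (hA.eigenvalues k - Complex.I * x) := by
  have hIx : ∀ x : ℝ, x ≠ 0 → ∀ k, Complex.I * x ≠ hA.eigenvalues k := fun x hx k h =>
    hx (by simpa using congrArg Complex.im h)
  rw [intervalIntegral.integral_congr_ae (Measure.ae_ne volume 0 |>.mono fun x hx _ =>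
      hA.coulsonIntegrand_eq_sum (hIx x hx) i),
    intervalIntegral.integral_finsetSum fun k _ =>
      (intervalIntegrable_div_sub_I_mul _ _ _).const_mul _]
  simp only [intervalIntegral.integral_const_mul]

end Coulson

theorem Matrix.IsHermitian.tendsto_intervalIntegral_coulsonIntegrand {n : ℕ}
    {A : Matrix (Fin (n + 1)) (Fin (n + 1)) ℝ} (hA : A.IsHermitian) (i : Fin (n + 1)) :
    Tendsto (fun R : ℝ => ∫ x in -R..R, coulsonIntegrand A i (Complex.I * x)) atTop
      (𝓝 ((Real.pi : ℂ) * (absMat A i i : ℝ))) := by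
  simp only [hA.intervalIntegral_coulsonIntegrand, absMat_apply_self hA, Complex.ofReal_sum,
    Finset.mul_sum]
  refine tendsto_finsetSum _ fun k _ => ?_
  convert (tendsto_intervalIntegral_div_sub_I_mul (hA.eigenvalues k)).const_mul _ using 2
  push_cast
  ring

/-- Coulson integral formula for a vertex:
E_G(v_i) = (1/π) PV∫_ℝ [1 - ix·φ(G - v_i; ix)/φ(G; ix)] dx, formalized as:
the symmetric partial integrals tend to π·E_G(v_i). -/
theorem coulson_integral_formula_vertex {n : ℕ} (G : SimpleGraph (Fin (n + 1)))
    (i : Fin (n + 1)) :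
    Filter.Tendsto
      (fun R : ℝ => ∫ x in (-R)..R,
        (1 - (Complex.I * (x : ℂ)) *
            ((Complex.I * (x : ℂ)) • (1 : Matrix (Fin n) (Fin n) ℂ)
              - ((adjMat G).map Complex.ofReal).submatrix i.succAbove i.succAbove).det /
            ((Complex.I * (x : ℂ)) • (1 : Matrix (Fin (n + 1)) (Fin (n + 1)) ℂ)
              - (adjMat G).map Complex.ofReal).det))
      Filter.atTop
      (nhds ((Real.pi : ℂ) * (vertexEnergy G i : ℝ))) := by
  have hA : (adjMat G).IsHermitian := letI := Classical.decRel G.Adj; G.isHermitian_adjMatrix ℝ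
  exact hA.tendsto_intervalIntegral_coulsonIntegrand i
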